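/- arXiv:math/0609594 — 4 statements merged into one kernel-verified Lean document; each statement's English description precedes it below -/
import Mathlib

section
/- Let 0 ≤ q < 1 and X be geometric with P(X=k) = (1-q)q^{k-1}, k ≥ 1. If 0 < c ≤ (1-q)/(1+q), then β = 0 is the only solution in [0,1] of the equation β = 1 - E[X e^{-cXβ}]/E[X]. -/
/-!
Since `e^{-u} > 1 - u` for `u > 0` and `X ≥ 1` almost surely, a root `β > 0` would give
`β E[X] = E[X] - E[X e^{-cβX}] < cβ E[X²]`, i.e. `c > E[X] / E[X²]`. For the geometric law
`E[X] = 1 / (1 - q)` and `E[X²] = (1 + q) / (1 - q)²`, so `E[X] / E[X²] = (1 - q) / (1 + q)`.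
-/

open MeasureTheory

section RootBound

variable {α : Type*} [MeasurableSpace α] {μ : Measure α}

theorem integral_pos_of_ae_pos [NeZero μ] {f : α → ℝ} (hf : ∀ᵐ x ∂μ, 0 < f x)
    (hfi : Integrable f μ) : 0 < ∫ x, f x ∂μ := by
  rw [integral_pos_iff_support_of_nonneg_ae (hf.mono fun _ h => h.le) hfi]
  have hcompl : μ (Function.support f)ᶜ = 0 :=
    measure_mono_null (fun x hx => by simp_all) (ae_iff.mp hf)
  refine pos_iff_ne_zero.mpr fun h => NeZero.ne μ ?_
  rw [← Measure.measure_univ_eq_zero, ← Set.union_compl_self (Function.support f)]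
  exact measure_union_null h hcompl

theorem sub_mul_sq_lt_mul_exp_neg {y t : ℝ} (hy : 0 < y) (ht : 0 < t) :
    y - t * y ^ 2 < y * Real.exp (-(t * y)) := by
  have h := Real.add_one_lt_exp (neg_ne_zero.mpr (mul_pos ht hy).ne')
  nlinarith

theorem integral_sub_mul_integral_sq_lt_integral_mul_exp_neg [NeZero μ] {Y : α → ℝ} {t : ℝ}
    (hY : ∀ᵐ x ∂μ, 0 < Y x) (hY₁ : Integrable Y μ) (hY₂ : Integrable (fun x => Y x ^ 2) μ)
    (ht : 0 < t) :
    ∫ x, Y x ∂μ - t * ∫ x, Y x ^ 2 ∂μ < ∫ x, Y x * Real.exp (-(t * Y x)) ∂μ := by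
  have hYe : Integrable (fun x => Y x * Real.exp (-(t * Y x))) μ := by
    refine hY₁.mono (hY₁.aestronglyMeasurable.mul ?_) ?_
    · exact (Real.continuous_exp.comp_aestronglyMeasurable
        (hY₁.aestronglyMeasurable.const_mul t).neg)
    · filter_upwards [hY] with x hx
      rw [norm_mul, Real.norm_of_nonneg (Real.exp_pos _).le]
      refine mul_le_of_le_one_right (norm_nonneg _) (Real.exp_le_one_iff.mpr ?_)
      nlinarith
  have hquad : Integrable (fun x => Y x - t * Y x ^ 2) μ := hY₁.sub (hY₂.const_mul t)
  have h := integral_pos_of_ae_pos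
    (hY.mono fun x hx => sub_pos.mpr (sub_mul_sq_lt_mul_exp_neg hx ht)) (hYe.sub hquad)
  rwa [integral_sub hYe hquad, integral_sub hY₁ (hY₂.const_mul t), integral_const_mul,
    sub_pos] at h

theorem integral_lt_mul_integral_sq_of_pos_root [NeZero μ] {Y : α → ℝ} {c β : ℝ}
    (hY : ∀ᵐ x ∂μ, 0 < Y x) (hY₁ : Integrable Y μ) (hY₂ : Integrable (fun x => Y x ^ 2) μ)
    (hc : 0 < c) (hβ : 0 < β)
    (hroot : β = 1 - (∫ x, Y x * Real.exp (-(c * Y x * β)) ∂μ) / ∫ x, Y x ∂μ) :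
    ∫ x, Y x ∂μ < c * ∫ x, Y x ^ 2 ∂μ := by
  have hmean := integral_pos_of_ae_pos hY hY₁
  have hlt := integral_sub_mul_integral_sq_lt_integral_mul_exp_neg hY hY₁ hY₂ (mul_pos hc hβ)
  simp_rw [← mul_right_comm c _ β] at hlt
  rw [eq_sub_iff_add_eq, ← eq_sub_iff_add_eq', div_eq_iff hmean.ne'] at hroot
  rw [hroot] at hlt
  exact lt_of_mul_lt_mul_left (by linarith) hβ.le

end RootBound

section NatValued

variable {Ω : Type*} [MeasurableSpace Ω] {μ : Measure Ω} {X : Ω → ℕ}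

theorem integrable_comp_nat_iff [IsFiniteMeasure μ] (hX : Measurable X) {g : ℕ → ℝ} :
    Integrable (fun ω => g (X ω)) μ ↔ Summable fun n => μ.real {ω | X ω = n} * ‖g n‖ := by
  refine (integrable_map_measure measurable_from_nat.aestronglyMeasurable
    hX.aemeasurable).symm.trans ?_
  conv_lhs => rw [← Measure.sum_smul_dirac (μ.map X)]
  rw [integrable_sum_dirac_iff fun _ => measure_ne_top _ _]
  simp only [Measure.map_apply hX (measurableSet_singleton _), measureReal_def]
  rfl

theorem integral_comp_nat_eq_tsum (hX : Measurable X) {g : ℕ → ℝ}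
    (hg : Integrable (fun ω => g (X ω)) μ) :
    ∫ ω, g (X ω) ∂μ = ∑' n, μ.real {ω | X ω = n} * g n := by
  rw [← integral_map hX.aemeasurable measurable_from_nat.aestronglyMeasurable,
    integral_countable ((integrable_map_measure measurable_from_nat.aestronglyMeasurable
      hX.aemeasurable).mpr hg)]
  simp only [map_measureReal_apply hX (measurableSet_singleton _), smul_eq_mul]
  rfl

theorem integrable_and_integral_comp_nat_of_hasSum [IsFiniteMeasure μ] (hX : Measurable X)
    {g : ℕ → ℝ} (hg : 0 ≤ g) {s : ℝ} (hs : HasSum (fun n => μ.real {ω | X ω = n} * g n) s) :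
    Integrable (fun ω => g (X ω)) μ ∧ ∫ ω, g (X ω) ∂μ = s := by
  have hint : Integrable (fun ω => g (X ω)) μ := by
    rw [integrable_comp_nat_iff hX]
    simpa only [Real.norm_of_nonneg (hg _)] using hs.summable
  exact ⟨hint, (integral_comp_nat_eq_tsum hX hint).trans hs.tsum_eq⟩

end NatValued

section Geometric

variable {q : ℝ}

theorem hasSum_geometric_mean (hq0 : 0 ≤ q) (hq1 : q < 1) :
    HasSum (fun n : ℕ => (1 - q) * q ^ n * ((n + 1 : ℕ) : ℝ)) (1 - q)⁻¹ := by
  have hq : ‖q‖ < 1 := by rwa [Real.norm_of_nonneg hq0]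
  have h := (hasSum_choose_mul_geometric_of_norm_lt_one 1 hq).mul_left (1 - q)
  rw [show (1 - q) * (1 / (1 - q) ^ (1 + 1)) = (1 - q)⁻¹ by
    field_simp [sub_ne_zero.mpr hq1.ne']] at h
  exact h.congr_fun fun n => by rw [Nat.choose_one_right]; ring

theorem hasSum_geometric_second_moment (hq0 : 0 ≤ q) (hq1 : q < 1) :
    HasSum (fun n : ℕ => (1 - q) * q ^ n * ((n + 1 : ℕ) : ℝ) ^ 2) ((1 + q) / (1 - q) ^ 2) := by
  have hq : ‖q‖ < 1 := by rwa [Real.norm_of_nonneg hq0]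
  have h := ((hasSum_choose_mul_geometric_of_norm_lt_one 2 hq).mul_left (2 * (1 - q))).sub
    (hasSum_geometric_mean hq0 hq1)
  rw [show 2 * (1 - q) * (1 / (1 - q) ^ (2 + 1)) - (1 - q)⁻¹ = (1 + q) / (1 - q) ^ 2 by
    field_simp [sub_ne_zero.mpr hq1.ne']; ring] at h
  -- `(n + 1) ^ 2 = 2 * (n + 2).choose 2 - (n + 1)`
  exact h.congr_fun fun n => by rw [Nat.cast_choose_two]; push_cast; ring

variable {Ω : Type*} [MeasurableSpace Ω] {μ : Measure Ω} {X : Ω → ℕ}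

theorem measure_eq_zero_of_geometric [IsProbabilityMeasure μ] (hq0 : 0 ≤ q) (hq1 : q < 1)
    (hXm : Measurable X)
    (hX : ∀ k : ℕ, 1 ≤ k → μ {ω | X ω = k} = ENNReal.ofReal ((1 - q) * q ^ (k - 1))) :
    μ {ω | X ω = 0} = 0 := by
  have hfibres : {ω | X ω = 0}ᶜ = ⋃ n : ℕ, {ω | X ω = n + 1} := by
    ext ω
    simp [Nat.exists_eq_add_one, Nat.pos_iff_ne_zero]
  have hmass := (hasSum_geometric_of_lt_one hq0 hq1).mul_left (1 - q)
  rw [mul_inv_cancel₀ (sub_ne_zero.mpr hq1.ne')] at hmass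
  have hmeas (k : ℕ) : MeasurableSet {ω | X ω = k} := hXm (measurableSet_singleton k)
  refine (prob_compl_eq_one_iff (hmeas 0)).mp ?_
  rw [hfibres, measure_iUnion (fun i j hij => ?_) (fun n => hmeas _)]
  · simp only [hX _ (Nat.le_add_left 1 _), Nat.add_sub_cancel]
    rw [← ENNReal.ofReal_tsum_of_nonneg
      (fun n => mul_nonneg (sub_nonneg.mpr hq1.le) (pow_nonneg hq0 n)) hmass.summable,
      hmass.tsum_eq, ENNReal.ofReal_one]
  · exact Set.disjoint_left.mpr fun ω hi hj => hij (by simp_all)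

theorem hasSum_measureReal_mul_of_geometric [IsProbabilityMeasure μ] (hq0 : 0 ≤ q)
    (hq1 : q < 1) (hXm : Measurable X)
    (hX : ∀ k : ℕ, 1 ≤ k → μ {ω | X ω = k} = ENNReal.ofReal ((1 - q) * q ^ (k - 1)))
    {g : ℕ → ℝ} {s : ℝ} (hs : HasSum (fun n => (1 - q) * q ^ n * g (n + 1)) s) :
    HasSum (fun n => μ.real {ω | X ω = n} * g n) s := by
  rw [← hasSum_nat_add_iff' 1]
  simp only [Finset.range_one, Finset.sum_singleton, measureReal_def,
    measure_eq_zero_of_geometric hq0 hq1 hXm hX, ENNReal.toReal_zero, zero_mul, sub_zero]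
  refine hs.congr_fun fun n => ?_
  rw [hX _ (Nat.le_add_left 1 _), Nat.add_sub_cancel,
    ENNReal.toReal_ofReal (mul_nonneg (sub_nonneg.mpr hq1.le) (pow_nonneg hq0 n))]

end Geometric

/-- In the (sub)critical case 0 < c ≤ (1-q)/(1+q), β = 0 is the only solution in [0,1]
of β = 1 - E[X e^{-cXβ}]/E[X]. -/
theorem stmt_7 {Ω : Type*} [MeasurableSpace Ω] (μ : Measure Ω) [IsProbabilityMeasure μ]
    (q c : ℝ) (hq0 : 0 ≤ q) (hq1 : q < 1) (hc0 : 0 < c) (hc : c ≤ (1 - q) / (1 + q))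
    (X : Ω → ℕ) (hXm : Measurable X)
    (hX : ∀ k : ℕ, 1 ≤ k → μ {ω | X ω = k} = ENNReal.ofReal ((1 - q) * q ^ (k - 1))) :
    ∀ β : ℝ, 0 ≤ β → β ≤ 1 →
      β = 1 - (∫ ω, (X ω : ℝ) * Real.exp (-(c * (X ω : ℝ) * β)) ∂μ) / (∫ ω, (X ω : ℝ) ∂μ) →
      β = 0 := by
  intro β hβ0 _ hroot
  by_contra hβ
  have hlaw {g : ℕ → ℝ} {s : ℝ} := hasSum_measureReal_mul_of_geometric (g := g) (s := s)
    hq0 hq1 hXm hX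
  obtain ⟨hint₁, hE₁⟩ := integrable_and_integral_comp_nat_of_hasSum hXm
    (fun k => Nat.cast_nonneg k) (hlaw (hasSum_geometric_mean hq0 hq1))
  obtain ⟨hint₂, hE₂⟩ := integrable_and_integral_comp_nat_of_hasSum hXm
    (fun k => sq_nonneg (k : ℝ)) (hlaw (hasSum_geometric_second_moment hq0 hq1))
  have hpos : ∀ᵐ ω ∂μ, 0 < (X ω : ℝ) := by
    simpa [ae_iff] using measure_eq_zero_of_geometric hq0 hq1 hXm hX
  have hlt := integral_lt_mul_integral_sq_of_pos_root hpos hint₁ hint₂ hc0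
    (lt_of_le_of_ne hβ0 (Ne.symm hβ)) hroot
  rw [hE₁, hE₂] at hlt
  have h1q : 0 < 1 - q := sub_pos.mpr hq1
  rw [le_div_iff₀ (by linarith)] at hc
  field_simp at hlt
  linarith
end

section
/- Let 0 ≤ q < 1 and X be geometric with P(X=k) = (1-q)q^{k-1}, k ≥ 1. If c > (1-q)/(1+q), then the equation β = 1 - E[X e^{-cXβ}]/E[X] has a solution β ∈ (0,1]. -/
/-!
Summing the geometric law gives `E[X e^{-tX}] = (1-q) e^{-t} / (1 - q e^{-t})²`, so the right-hand
side of the equation is `1 - L(cβ)` with `L t = (1-q)² e^{-t} / (1 - q e^{-t})²`, the Laplace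
transform of the size-biased law of `X`. The function `φ β = 1 - L(cβ) - β` vanishes at `0`, where
its slope is `c (1+q)/(1-q) - 1`, positive exactly under the supercriticality condition; and
`φ 1 = -L c < 0`. So `φ` is positive just to the right of `0`, and the intermediate value theorem
gives a root in `(0, 1)`.
-/

open MeasureTheory Filter Set Real Topology

theorem exists_mem_Ioo_eq_zero_of_hasDerivWithinAt_pos {f : ℝ → ℝ} {a b f' : ℝ} (hab : a < b)
    (hf : ContinuousOn f (Icc a b)) (ha : f a = 0) (hf' : HasDerivWithinAt f f' (Ioi a) a)
    (hf'_pos : 0 < f') (hb : f b < 0) : ∃ x ∈ Ioo a b, f x = 0 := by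
  have hslope : ∀ᶠ x in 𝓝[>] a, 0 < slope f a x ∧ x ∈ Ioo a b :=
    (((hasDerivWithinAt_iff_tendsto_slope' (lt_irrefl a)).mp hf').eventually
      (lt_mem_nhds hf'_pos)).and (Ioo_mem_nhdsGT hab)
  obtain ⟨x₀, hx₀_slope, hx₀a, hx₀b⟩ := hslope.exists
  have hfx₀ : 0 < f x₀ := by
    rw [slope_def_field, ha, sub_zero] at hx₀_slope
    exact (div_pos_iff_of_pos_right (sub_pos.mpr hx₀a)).mp hx₀_slope
  obtain ⟨x, hx, hfx⟩ := intermediate_value_Icc' hx₀b.le (hf.mono (Icc_subset_Icc_left hx₀a.le))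
    ⟨hb.le, hfx₀.le⟩
  exact ⟨x, ⟨hx₀a.trans_le hx.1, hx.2.lt_of_ne (by rintro rfl; linarith)⟩, hfx⟩

theorem integral_comp_eq_of_hasSum {Ω : Type*} [MeasurableSpace Ω] {μ : Measure Ω}
    [IsFiniteMeasure μ] {X : Ω → ℕ} (hX : Measurable X) {f : ℕ → ℝ} (hf : ∀ k, 0 ≤ f k) {s : ℝ}
    (h : HasSum (fun k => f k * μ.real {ω | X ω = k}) s) : ∫ ω, f (X ω) ∂μ = s := by
  have hterm : ∀ k, ENNReal.ofReal (f k) * μ.map X {k} =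
      ENNReal.ofReal (f k * μ.real {ω | X ω = k}) := fun k => by
    rw [Measure.map_apply hX (measurableSet_singleton k), ENNReal.ofReal_mul (hf k),
      measureReal_def, ENNReal.ofReal_toReal (measure_ne_top _ _)]
    rfl
  have hs : 0 ≤ s := h.nonneg fun k => mul_nonneg (hf k) measureReal_nonneg
  rw [integral_eq_lintegral_of_nonneg_ae (.of_forall fun ω => hf (X ω))
      (measurable_from_nat.comp hX).aestronglyMeasurable,
    ← lintegral_map measurable_from_nat.ennreal_ofReal hX, lintegral_countable', tsum_congr hterm,
    ← ENNReal.ofReal_tsum_of_nonneg (fun k => mul_nonneg (hf k) measureReal_nonneg) h.summable,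
    h.tsum_eq, ENNReal.toReal_ofReal hs]

theorem hasSum_nat_mul_exp_neg_mul_geometric {q t : ℝ} (h : ‖q * exp (-t)‖ < 1) :
    HasSum (fun k : ℕ => k * exp (-(t * k)) * ((1 - q) * q ^ (k - 1)))
      ((1 - q) * exp (-t) / (1 - q * exp (-t)) ^ 2) := by
  have hterm : ∀ n : ℕ, ((n + 1 : ℕ) : ℝ) * exp (-(t * (n + 1 : ℕ))) * ((1 - q) * q ^ (n + 1 - 1))
      = (1 - q) * exp (-t) * ((n + 1).choose 1 * (q * exp (-t)) ^ n) := by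
    intro n
    rw [Nat.add_sub_cancel, Nat.choose_one_right, mul_pow, ← exp_nat_mul]
    push_cast
    rw [show -(t * (n + 1)) = -t + n * -t by ring, exp_add]
    ring
  have hsum := (hasSum_choose_mul_geometric_of_norm_lt_one 1 h).mul_left ((1 - q) * exp (-t))
  rw [← div_eq_mul_one_div] at hsum
  rw [← hasSum_nat_add_iff' 1]
  simp only [hterm, Finset.range_one, Finset.sum_singleton, Nat.cast_zero, zero_mul, sub_zero]
  exact hsum

theorem integral_mul_exp_neg_of_geometric {Ω : Type*} [MeasurableSpace Ω] {μ : Measure Ω}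
    [IsFiniteMeasure μ] {q t : ℝ} (hq0 : 0 ≤ q) (hq1 : q ≤ 1) (ht : ‖q * exp (-t)‖ < 1)
    {X : Ω → ℕ} (hXm : Measurable X)
    (hX : ∀ k : ℕ, 1 ≤ k → μ {ω | X ω = k} = ENNReal.ofReal ((1 - q) * q ^ (k - 1))) :
    ∫ ω, (X ω : ℝ) * exp (-(t * X ω)) ∂μ = (1 - q) * exp (-t) / (1 - q * exp (-t)) ^ 2 := by
  refine integral_comp_eq_of_hasSum (f := fun k : ℕ => (k : ℝ) * exp (-(t * k))) hXm
    (fun k => by positivity) ?_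
  convert hasSum_nat_mul_exp_neg_mul_geometric ht using 2 with k
  rcases Nat.eq_zero_or_pos k with rfl | hk
  · simp
  · rw [measureReal_def, hX k hk, ENNReal.toReal_ofReal (by have := sub_nonneg.2 hq1; positivity)]

theorem mul_exp_neg_lt_one {q t : ℝ} (hq : q < 1) (ht : 0 ≤ t) : q * exp (-t) < 1 := by
  have h0 := exp_pos (-t)
  have h1 : exp (-t) ≤ 1 := exp_le_one_iff.mpr (by linarith)
  rcases le_or_gt 0 q with hq0 | hq0 <;> nlinarith

noncomputable def sizeBiasedGeomLaplace (q t : ℝ) : ℝ :=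
  (1 - q) ^ 2 * exp (-t) / (1 - q * exp (-t)) ^ 2

theorem sizeBiasedGeomLaplace_zero {q : ℝ} (hq : q ≠ 1) : sizeBiasedGeomLaplace q 0 = 1 := by
  have : 1 - q ≠ 0 := sub_ne_zero.2 hq.symm
  simp [sizeBiasedGeomLaplace, this]

theorem sizeBiasedGeomLaplace_pos {q t : ℝ} (hq : q ≠ 1) (ht : q * exp (-t) ≠ 1) :
    0 < sizeBiasedGeomLaplace q t := by
  have h1 : 1 - q ≠ 0 := sub_ne_zero.2 hq.symm
  have h2 : 1 - q * exp (-t) ≠ 0 := sub_ne_zero.2 ht.symm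
  unfold sizeBiasedGeomLaplace
  positivity

theorem continuousAt_sizeBiasedGeomLaplace {q t : ℝ} (ht : q * exp (-t) ≠ 1) :
    ContinuousAt (sizeBiasedGeomLaplace q) t := by
  have h : (1 - q * exp (-t)) ^ 2 ≠ 0 := pow_ne_zero _ (sub_ne_zero.2 ht.symm)
  unfold sizeBiasedGeomLaplace
  fun_prop (disch := exact h)

theorem hasDerivAt_sizeBiasedGeomLaplace_zero {q : ℝ} (hq : q ≠ 1) :
    HasDerivAt (sizeBiasedGeomLaplace q) (-((1 + q) / (1 - q))) 0 := by
  have h1 : 1 - q ≠ 0 := sub_ne_zero.2 hq.symm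
  have hexp : HasDerivAt (fun t => exp (-t)) (-1) 0 := by
    simpa using (hasDerivAt_neg (0 : ℝ)).exp
  have hden := ((hexp.const_mul q).const_sub 1).pow 2
  refine ((hexp.const_mul ((1 - q) ^ 2)).div hden (by simpa using h1)).congr_deriv ?_
  simp only [Pi.pow_apply, neg_zero, exp_zero, mul_one]
  field_simp
  ring

theorem integral_mul_exp_neg_div_integral_of_geometric {Ω : Type*} [MeasurableSpace Ω]
    {μ : Measure Ω} [IsFiniteMeasure μ] {q t : ℝ} (hq0 : 0 ≤ q) (hq1 : q < 1) (ht : 0 ≤ t)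
    {X : Ω → ℕ} (hXm : Measurable X)
    (hX : ∀ k : ℕ, 1 ≤ k → μ {ω | X ω = k} = ENNReal.ofReal ((1 - q) * q ^ (k - 1))) :
    (∫ ω, (X ω : ℝ) * exp (-(t * X ω)) ∂μ) / ∫ ω, (X ω : ℝ) ∂μ = sizeBiasedGeomLaplace q t := by
  have hnorm : ∀ s, 0 ≤ s → ‖q * exp (-s)‖ < 1 := fun s hs => by
    rw [norm_of_nonneg (by positivity)]
    exact mul_exp_neg_lt_one hq1 hs
  have hmean := integral_mul_exp_neg_of_geometric hq0 hq1.le (hnorm 0 le_rfl) hXm hX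
  simp only [zero_mul, neg_zero, exp_zero, mul_one] at hmean
  have h1 : 1 - q ≠ 0 := by linarith
  rw [integral_mul_exp_neg_of_geometric hq0 hq1.le (hnorm t ht) hXm hX, hmean,
    sizeBiasedGeomLaplace]
  field_simp

/-- In the supercritical case c > (1-q)/(1+q), the equation β = 1 - E[X e^{-cXβ}]/E[X]
has a solution β ∈ (0,1]. -/
theorem stmt_8 {Ω : Type*} [MeasurableSpace Ω] (μ : Measure Ω) [IsProbabilityMeasure μ]
    (q c : ℝ) (hq0 : 0 ≤ q) (hq1 : q < 1) (hc : (1 - q) / (1 + q) < c)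
    (X : Ω → ℕ) (hXm : Measurable X)
    (hX : ∀ k : ℕ, 1 ≤ k → μ {ω | X ω = k} = ENNReal.ofReal ((1 - q) * q ^ (k - 1))) :
    ∃ β : ℝ, 0 < β ∧ β ≤ 1 ∧
      β = 1 - (∫ ω, (X ω : ℝ) * Real.exp (-(c * (X ω : ℝ) * β)) ∂μ) / (∫ ω, (X ω : ℝ) ∂μ) := by
  have hq : q ≠ 1 := hq1.ne
  have hc0 : 0 < c := (div_pos (by linarith) (by linarith)).trans hc
  have hlt : ∀ β, 0 ≤ β → q * exp (-(c * β)) ≠ 1 := fun β hβ =>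
    (mul_exp_neg_lt_one hq1 (by positivity)).ne
  set φ : ℝ → ℝ := fun β => 1 - sizeBiasedGeomLaplace q (c * β) - β
  have hφ_cont : ContinuousOn φ (Icc 0 1) := fun β hβ =>
    ContinuousAt.continuousWithinAt <| (continuousAt_const.sub
      ((continuousAt_sizeBiasedGeomLaplace (hlt β hβ.1)).comp
        (continuousAt_const.mul continuousAt_id))).sub continuousAt_id
  have hφ_deriv : HasDerivAt φ (c * ((1 + q) / (1 - q)) - 1) 0 := by
    refine ((((hasDerivAt_sizeBiasedGeomLaplace_zero hq).comp_of_eq 0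
      ((hasDerivAt_id 0).const_mul c) (by simp)).const_sub 1).sub (hasDerivAt_id 0)).congr_deriv ?_
    ring
  have hφ_deriv_pos : 0 < c * ((1 + q) / (1 - q)) - 1 := by
    have := (div_lt_iff₀ (by linarith : (0:ℝ) < 1 + q)).1 hc
    rw [sub_pos, mul_div_assoc', one_lt_div (by linarith)]
    linarith
  obtain ⟨β, ⟨hβ0, hβ1⟩, hφβ⟩ := exists_mem_Ioo_eq_zero_of_hasDerivWithinAt_pos one_pos hφ_cont
    (by simp [φ, sizeBiasedGeomLaplace_zero hq]) hφ_deriv.hasDerivWithinAt hφ_deriv_pos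
    (by simp only [φ]; linarith [sizeBiasedGeomLaplace_pos hq (hlt 1 zero_le_one)])
  refine ⟨β, hβ0, hβ1.le, ?_⟩
  simp_rw [mul_right_comm c _ β]
  rw [integral_mul_exp_neg_div_integral_of_geometric hq0 hq1 (by positivity) hXm hX]
  simp only [φ] at hφβ
  linarith
end

section
/- Let 0 ≤ q < 1, c > 0, and define F(y) = (1-q)·e^{c((1-q)y - 1)} / (1 - q e^{c((1-q)y - 1)})² for y with q e^{c((1-q)y-1)} < 1. Then F(1/(1-q)) = 1/(1-q) and F'(1/(1-q)) = c(1+q)/(1-q), i.e., the derivative of F at y = E[X] equals c/c^cr(q). -/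
/-! At `y = 1 / (1 - q)` the exponent vanishes. Write
`F = φ ∘ (y ↦ c ((1 - q) y - 1))` with `φ t = (1 - q) eᵗ / (1 - q eᵗ)²`, so by the chain rule
`F' (1 / (1 - q)) = φ' 0 · c (1 - q) = (1 + q) / (1 - q)² · c (1 - q)`. -/

open Real

theorem hasDerivAt_mul_exp_div_one_sub_mul_exp_sq (a q t : ℝ) (h : q * exp t ≠ 1) :
    HasDerivAt (fun t => a * exp t / (1 - q * exp t) ^ 2)
      (a * exp t * (1 + q * exp t) / (1 - q * exp t) ^ 3) t := by
  have hden : 1 - q * exp t ≠ 0 := sub_ne_zero.2 h.symm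
  have hnum : HasDerivAt (fun t => a * exp t) (a * exp t) t := (hasDerivAt_exp t).const_mul a
  have hbase : HasDerivAt (fun t => 1 - q * exp t) (-(q * exp t)) t :=
    ((hasDerivAt_exp t).const_mul q).const_sub 1
  refine (hnum.div (hbase.pow 2) (pow_ne_zero 2 hden)).congr_deriv ?_
  simp only [Pi.pow_apply]
  rw [div_eq_div_iff (by positivity) (by positivity)]
  ring

theorem stmt_12_general (q c : ℝ) (hq1 : q < 1) :
    (fun y : ℝ => (1 - q) * Real.exp (c * ((1 - q) * y - 1)) /
        (1 - q * Real.exp (c * ((1 - q) * y - 1))) ^ 2) (1 / (1 - q)) = 1 / (1 - q) ∧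
    HasDerivAt (fun y : ℝ => (1 - q) * Real.exp (c * ((1 - q) * y - 1)) /
        (1 - q * Real.exp (c * ((1 - q) * y - 1))) ^ 2)
      (c * (1 + q) / (1 - q)) (1 / (1 - q)) := by
  have hq : 1 - q ≠ 0 := sub_ne_zero.2 hq1.ne'
  have hexponent : c * ((1 - q) * (1 / (1 - q)) - 1) = 0 := by field_simp; ring
  have hinner : HasDerivAt (fun y => c * ((1 - q) * y - 1)) (c * (1 - q)) (1 / (1 - q)) := by
    simpa using (((hasDerivAt_id _).const_mul (1 - q)).sub_const 1).const_mul c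
  have houter := hasDerivAt_mul_exp_div_one_sub_mul_exp_sq (1 - q) q 0 (by simpa using hq1.ne)
  constructor
  · simp only [hexponent, exp_zero, mul_one]
    field_simp
  · refine (houter.comp_of_eq (1 / (1 - q)) hinner hexponent.symm).congr_deriv ?_
    simp only [exp_zero, mul_one]
    field_simp

/-- The function F(y) = (1-q) e^{c((1-q)y-1)} / (1 - q e^{c((1-q)y-1)})² satisfies
F(1/(1-q)) = 1/(1-q) and F'(1/(1-q)) = c(1+q)/(1-q) = c/c^cr(q). -/
theorem stmt_12 (q c : ℝ) (hq0 : 0 ≤ q) (hq1 : q < 1) (hc : 0 < c) :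
    (fun y : ℝ => (1 - q) * Real.exp (c * ((1 - q) * y - 1)) /
        (1 - q * Real.exp (c * ((1 - q) * y - 1))) ^ 2) (1 / (1 - q)) = 1 / (1 - q) ∧
    HasDerivAt (fun y : ℝ => (1 - q) * Real.exp (c * ((1 - q) * y - 1)) /
        (1 - q * Real.exp (c * ((1 - q) * y - 1))) ^ 2)
      (c * (1 + q) / (1 - q)) (1 / (1 - q)) :=
  stmt_12_general q c hq1
end

section
/- Let Y ~ Bin(n,p) with 0 < p < 1/4 and Z ~ Po(np/(1-p)). Then for every integer k ≥ 0, P(Y = k) ≤ (1 + C p²)^n · P(Z = k) for some absolute constant C > 0 independent of n, p, and k. -/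
lemma key_ineq (p : ℝ) (hp : 0 < p) (hp4 : p < 1 / 4) :
    (1 - p) * Real.exp (p / (1 - p)) ≤ 1 + 3 * p ^ 2 := by
  have h1p : (0:ℝ) < 1 - p := by linarith
  have hsplit : p / (1 - p) = p + p ^ 2 / (1 - p) := by field_simp; ring
  rw [hsplit, Real.exp_add]
  set x : ℝ := p ^ 2 / (1 - p) with hx
  have hx0 : 0 ≤ x := by positivity
  have hxlt : x < 1 / 2 := by
    rw [hx, div_lt_iff₀ h1p]; nlinarith
  have hA : (1 - p) * Real.exp p ≤ 1 := by
    have h := Real.add_one_le_exp (-p)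
    calc (1 - p) * Real.exp p ≤ Real.exp (-p) * Real.exp p := by
          apply mul_le_mul_of_nonneg_right _ (Real.exp_nonneg p); linarith
      _ = 1 := by rw [← Real.exp_add]; simp
  have hB : Real.exp x ≤ 1 + 3 * p ^ 2 := by
    have h := Real.add_one_le_exp (-x)
    have hex : Real.exp x * (1 - x) ≤ 1 := by
      have := Real.exp_pos x
      calc Real.exp x * (1 - x) ≤ Real.exp x * Real.exp (-x) := by
            apply mul_le_mul_of_nonneg_left _ (Real.exp_nonneg x); linarith
        _ = 1 := by rw [← Real.exp_add]; simp
    have h1x : (0:ℝ) < 1 - x := by linarith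
    have hexle : Real.exp x ≤ 1 / (1 - x) := by
      rw [le_div_iff₀ h1x]; linarith
    refine hexle.trans ?_
    rw [div_le_iff₀ h1x]
    have hxeq : x * (1 - p) = p ^ 2 := by rw [hx]; field_simp
    nlinarith [hxeq, mul_pos hp hp, sq_nonneg p, hx0, hxlt]
  calc (1 - p) * (Real.exp p * Real.exp x)
      = ((1 - p) * Real.exp p) * Real.exp x := by ring
    _ ≤ 1 * Real.exp x := by
        apply mul_le_mul_of_nonneg_right hA (Real.exp_nonneg x)
    _ = Real.exp x := one_mul _
    _ ≤ 1 + 3 * p ^ 2 := hB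

/-- Binomial point probabilities are dominated by Poisson point probabilities with mean
np/(1-p), up to a factor (1 + C p²)^n, for an absolute constant C. -/
theorem stmt_17 :
    ∃ C : ℝ, 0 < C ∧ ∀ (n : ℕ) (p : ℝ), 0 < p → p < 1 / 4 → ∀ k : ℕ,
      (n.choose k : ℝ) * p ^ k * (1 - p) ^ (n - k) ≤
        (1 + C * p ^ 2) ^ n *
          (Real.exp (-(n * p / (1 - p))) * (n * p / (1 - p)) ^ k / (k.factorial : ℝ)) := by
  refine ⟨3, by norm_num, ?_⟩
  intro n p hp hp4 k
  have h1p : (0:ℝ) < 1 - p := by linarith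
  set q : ℝ := p / (1 - p) with hq
  have hq0 : 0 < q := div_pos hp h1p
  have hlam : (n : ℝ) * p / (1 - p) = n * q := by rw [hq, mul_div_assoc]
  have hexp : Real.exp (-((n : ℝ) * p / (1 - p))) = Real.exp (-q) ^ n := by
    rw [hlam, ← Real.exp_nat_mul]; congr 1; ring
  rcases le_or_gt k n with hk | hk
  · -- k ≤ n
    have hpow : (1 - p) ^ n ≤ (1 + 3 * p ^ 2) ^ n * Real.exp (-q) ^ n := by
      have keyn : ((1 - p) * Real.exp q) ^ n ≤ (1 + 3 * p ^ 2) ^ n := by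
        apply pow_le_pow_left₀ (by positivity) (key_ineq p hp hp4)
      have hmul : Real.exp q ^ n * Real.exp (-q) ^ n = 1 := by
        rw [← mul_pow, ← Real.exp_add]; simp
      calc (1 - p) ^ n = (1 - p) ^ n * (Real.exp q ^ n * Real.exp (-q) ^ n) := by
            rw [hmul, mul_one]
        _ = ((1 - p) * Real.exp q) ^ n * Real.exp (-q) ^ n := by rw [mul_pow]; ring
        _ ≤ (1 + 3 * p ^ 2) ^ n * Real.exp (-q) ^ n := by
            apply mul_le_mul_of_nonneg_right keyn (by positivity)
    have hp_eq : p ^ k = q ^ k * (1 - p) ^ k := by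
      rw [← mul_pow, hq]; field_simp
    have hchoose : (n.choose k : ℝ) ≤ (n : ℝ) ^ k / (k.factorial : ℝ) := by
      have := Nat.choose_le_pow_div (α := ℝ) k n
      simpa using this
    have hpowsplit : (1 - p) ^ k * (1 - p) ^ (n - k) = (1 - p) ^ n := by
      rw [← pow_add, Nat.add_sub_cancel' hk]
    calc (n.choose k : ℝ) * p ^ k * (1 - p) ^ (n - k)
        ≤ ((n : ℝ) ^ k / (k.factorial : ℝ)) * p ^ k * (1 - p) ^ (n - k) := by
          apply mul_le_mul_of_nonneg_right _ (by positivity)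
          exact mul_le_mul_of_nonneg_right hchoose (by positivity)
      _ = ((n : ℝ) ^ k * q ^ k / (k.factorial : ℝ)) * ((1 - p) ^ k * (1 - p) ^ (n - k)) := by
          rw [hp_eq]; ring
      _ = ((n : ℝ) ^ k * q ^ k / (k.factorial : ℝ)) * (1 - p) ^ n := by rw [hpowsplit]
      _ ≤ ((n : ℝ) ^ k * q ^ k / (k.factorial : ℝ)) *
            ((1 + 3 * p ^ 2) ^ n * Real.exp (-q) ^ n) := by
          apply mul_le_mul_of_nonneg_left hpow (by positivity)
      _ = (1 + 3 * p ^ 2) ^ n *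
            (Real.exp (-((n : ℝ) * p / (1 - p))) * ((n : ℝ) * p / (1 - p)) ^ k /
              (k.factorial : ℝ)) := by
          rw [hexp, hlam, mul_pow]; ring
  · -- k > n : LHS = 0
    have hzero : (n.choose k : ℝ) = 0 := by
      rw [Nat.choose_eq_zero_of_lt hk]; norm_num
    rw [hzero, zero_mul, zero_mul]
    have hlamnn : (0:ℝ) ≤ (n : ℝ) * p / (1 - p) := by positivity
    positivity
end
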